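/- Let h : Γ → Γ' be a morphism of groupoids and let B be a bisection of Γ. Then the image h(B) := {y ∈ Γ' : ∃ x ∈ B, (y, x) ∈ Gr(h)} is a bisection of Γ'. -/
import Mathlib


/-- A groupoid in the sense of Zakrzewski: `m z x y` means `(z; x, y) ∈ m`,
`E` is the set of identities and `s` is the inverse map. -/
def IsZGroupoid {Γ : Type*} (m : Γ → Γ → Γ → Prop) (E : Set Γ) (s : Γ → Γ) : Prop :=
  (∀ x, s (s x) = x) ∧
  (∀ x y w z, (∃ u, m u x y ∧ m z u w) ↔ (∃ v, m v y w ∧ m z x v)) ∧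
  (∀ z x, (∃ a ∈ E, m z a x) ↔ z = x) ∧
  (∀ z x, (∃ a ∈ E, m z x a) ↔ z = x) ∧
  (∀ z x y, m (s z) x y ↔ m z (s y) (s x)) ∧
  (∀ x, ∃ z, m z (s x) x) ∧
  (∀ x z, m z (s x) x → z ∈ E)

/-- A morphism of Zakrzewski groupoids from `(Γ, m, E, s)` to `(Γ', m', E', s')`:
`h y x` means `(y, x) ∈ Gr(h) ⊆ Γ' × Γ`. -/
def IsZMorphism {Γ Γ' : Type*} (m : Γ → Γ → Γ → Prop) (E : Set Γ) (s : Γ → Γ)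
    (m' : Γ' → Γ' → Γ' → Prop) (E' : Set Γ') (s' : Γ' → Γ')
    (h : Γ' → Γ → Prop) : Prop :=
  (∀ y' x₁ x₂, (∃ x, m x x₁ x₂ ∧ h y' x) ↔ (∃ y₁ y₂, h y₁ x₁ ∧ h y₂ x₂ ∧ m' y' y₁ y₂)) ∧
  (∀ y' x, h y' (s x) ↔ h (s' y') x) ∧
  {y' | ∃ a ∈ E, h y' a} = E'

/-- A bisection of a Zakrzewski groupoid with identities `E` and identity maps
`eL`, `eR`: both restrictions `e_L|_B` and `e_R|_B` are bijections onto `E`. -/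
def IsBisection {Γ : Type*} (E : Set Γ) (eL eR : Γ → Γ) (B : Set Γ) : Prop :=
  Set.BijOn eL B E ∧ Set.BijOn eR B E

section Aux
variable {Γ : Type*} {m : Γ → Γ → Γ → Prop} {E : Set Γ} {s : Γ → Γ} {eL eR : Γ → Γ}

lemma zg_idL (hG : IsZGroupoid m E s) {z a x : Γ} (ha : a ∈ E) (hm : m z a x) : z = x :=
  (hG.2.2.1 z x).mp ⟨a, ha, hm⟩

lemma zg_idR (hG : IsZGroupoid m E s) {z x b : Γ} (hb : b ∈ E) (hm : m z x b) : z = x :=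
  (hG.2.2.2.1 z x).mp ⟨b, hb, hm⟩

lemma zg_uniqL (hG : IsZGroupoid m E s) {a b x : Γ} (ha : a ∈ E) (hb : b ∈ E)
    (h1 : m x a x) (h2 : m x b x) : a = b := by
  obtain ⟨u, hu1, hu2⟩ := (hG.2.1 a b x x).mpr ⟨x, h2, h1⟩
  exact (zg_idR hG hb hu1).symm.trans (zg_idL hG ha hu1)

lemma zg_uniqR (hG : IsZGroupoid m E s) {a b x : Γ} (ha : a ∈ E) (hb : b ∈ E)
    (h1 : m x x a) (h2 : m x x b) : a = b := by
  obtain ⟨v, hv1, hv2⟩ := (hG.2.1 x a b x).mp ⟨x, h1, h2⟩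
  exact (zg_idR hG hb hv1).symm.trans (zg_idL hG ha hv1)

lemma zg_maa (hG : IsZGroupoid m E s) {a : Γ} (ha : a ∈ E) : m a a a := by
  obtain ⟨b, hb, hm⟩ := (hG.2.2.1 a a).mpr rfl
  have hab : a = b := zg_idR hG ha hm
  rwa [← hab] at hm

lemma zg_eLid (hG : IsZGroupoid m E s) (hL : ∀ x, eL x ∈ E ∧ m x (eL x) x)
    {a : Γ} (ha : a ∈ E) : eL a = a :=
  zg_uniqL hG (hL a).1 ha (hL a).2 (zg_maa hG ha)

lemma zg_eRid (hG : IsZGroupoid m E s) (hR : ∀ x, eR x ∈ E ∧ m x x (eR x))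
    {a : Γ} (ha : a ∈ E) : eR a = a :=
  zg_uniqR hG (hR a).1 ha (hR a).2 (zg_maa hG ha)

lemma zg_L7L (hG : IsZGroupoid m E s) (hL : ∀ x, eL x ∈ E ∧ m x (eL x) x)
    {z x y : Γ} (hm : m z x y) : eL z = eL x := by
  obtain ⟨v, hv1, hv2⟩ := (hG.2.1 (eL x) x y z).mp ⟨x, (hL x).2, hm⟩
  have hzv : z = v := zg_idL hG (hL x).1 hv2
  rw [← hzv] at hv2
  exact zg_uniqL hG (hL z).1 (hL x).1 (hL z).2 hv2

lemma zg_L7R (hG : IsZGroupoid m E s) (hR : ∀ x, eR x ∈ E ∧ m x x (eR x))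
    {z x y : Γ} (hm : m z x y) : eR z = eR y := by
  obtain ⟨u, hu1, hu2⟩ := (hG.2.1 x y (eR y) z).mpr ⟨y, (hR y).2, hm⟩
  have hzu : z = u := zg_idR hG (hR y).1 hu2
  rw [← hzu] at hu2
  exact zg_uniqR hG (hR z).1 (hR y).1 (hR z).2 hu2

lemma zg_L4 (hG : IsZGroupoid m E s) (hL : ∀ x, eL x ∈ E ∧ m x (eL x) x)
    (hR : ∀ x, eR x ∈ E ∧ m x x (eR x)) {z x y : Γ} (hm : m z x y) : eR x = eL y := by
  obtain ⟨v, hv1, hv2⟩ := (hG.2.1 x (eR x) y z).mp ⟨x, (hR x).2, hm⟩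
  have hvy : v = y := zg_idL hG (hR x).1 hv1
  rw [hvy] at hv1
  exact zg_uniqL hG (hR x).1 (hL y).1 hv1 (hL y).2

lemma zg_posR (hG : IsZGroupoid m E s) (hR : ∀ x, eR x ∈ E ∧ m x x (eR x))
    {u x : Γ} (hm : m u (s x) x) : u = eR x := by
  have hu : u ∈ E := hG.2.2.2.2.2.2 x u hm
  exact (zg_eRid hG hR hu).symm.trans (zg_L7R hG hR hm)

lemma zg_posR_ex (hG : IsZGroupoid m E s) (hR : ∀ x, eR x ∈ E ∧ m x x (eR x))
    (x : Γ) : m (eR x) (s x) x := by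
  obtain ⟨z, hz⟩ := hG.2.2.2.2.2.1 x
  have := zg_posR hG hR hz
  rwa [this] at hz

lemma zg_posL (hG : IsZGroupoid m E s) (hL : ∀ x, eL x ∈ E ∧ m x (eL x) x)
    {u x : Γ} (hm : m u x (s x)) : u = eL x := by
  have h2 : m u (s (s x)) (s x) := by rw [hG.1]; exact hm
  have hu : u ∈ E := hG.2.2.2.2.2.2 (s x) u h2
  exact (zg_eLid hG hL hu).symm.trans (zg_L7L hG hL hm)

lemma zg_posL_ex (hG : IsZGroupoid m E s) (hL : ∀ x, eL x ∈ E ∧ m x (eL x) x)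
    (x : Γ) : m (eL x) x (s x) := by
  obtain ⟨z, hz⟩ := hG.2.2.2.2.2.1 (s x)
  rw [hG.1] at hz
  have := zg_posL hG hL hz
  rwa [this] at hz

lemma zg_sE (hG : IsZGroupoid m E s) (hR : ∀ x, eR x ∈ E ∧ m x x (eR x))
    {a : Γ} (ha : a ∈ E) : s a = a := by
  have h1 : m (eR a) (s a) a := zg_posR_ex hG hR a
  rw [zg_eRid hG hR ha] at h1
  exact (zg_idR hG ha h1).symm

lemma zg_eLs (hG : IsZGroupoid m E s) (hL : ∀ x, eL x ∈ E ∧ m x (eL x) x)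
    (hR : ∀ x, eR x ∈ E ∧ m x x (eR x)) (y : Γ) : eL (s y) = eR y := by
  have h1 : m (s y) (s (eR y)) (s y) := by
    apply (hG.2.2.2.2.1 y (s (eR y)) (s y)).mpr
    simp only [hG.1]
    exact (hR y).2
  rw [zg_sE hG hR (hR y).1] at h1
  exact zg_uniqL hG (hL (s y)).1 (hR y).1 (hL (s y)).2 h1

lemma zg_eRs (hG : IsZGroupoid m E s) (hL : ∀ x, eL x ∈ E ∧ m x (eL x) x)
    (hR : ∀ x, eR x ∈ E ∧ m x x (eR x)) (y : Γ) : eR (s y) = eL y := by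
  have h1 : m (s y) (s y) (s (eL y)) := by
    apply (hG.2.2.2.2.1 y (s y) (s (eL y))).mpr
    simp only [hG.1]
    exact (hL y).2
  rw [zg_sE hG hR (hL y).1] at h1
  exact zg_uniqR hG (hR (s y)).1 (hL y).1 (hR (s y)).2 h1

lemma zg_comp (hG : IsZGroupoid m E s) (hL : ∀ x, eL x ∈ E ∧ m x (eL x) x)
    (hR : ∀ x, eR x ∈ E ∧ m x x (eR x)) {x y : Γ} (heq : eR x = eL y) : ∃ z, m z x y := by
  obtain ⟨v, hv, -⟩ := (hG.2.1 (s x) x y y).mp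
    ⟨eR x, zg_posR_ex hG hR x, by rw [heq]; exact (hL y).2⟩
  exact ⟨v, hv⟩

lemma zg_L11 (hG : IsZGroupoid m E s) (hL : ∀ x, eL x ∈ E ∧ m x (eL x) x)
    (hR : ∀ x, eR x ∈ E ∧ m x x (eR x)) {z x y : Γ} (hz : z ∈ E)
    (hm : m z (s x) y) : x = y := by
  have h1 : eL z = eR x := (zg_L7L hG hL hm).trans (zg_eLs hG hL hR x)
  have h2 : z = eR x := (zg_eLid hG hL hz).symm.trans h1
  have h3 : m x x z := by rw [h2]; exact (hR x).2
  obtain ⟨u, hu1, hu2⟩ := (hG.2.1 x (s x) y x).mpr ⟨z, hm, h3⟩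
  rw [zg_posL hG hL hu1] at hu2
  exact zg_idL hG (hL x).1 hu2

end Aux

/-- The image of a bisection under a morphism of groupoids is a bisection. -/
theorem stmt14 {Γ Γ' : Type*}
    (m : Γ → Γ → Γ → Prop) (E : Set Γ) (s : Γ → Γ) (hG : IsZGroupoid m E s)
    (m' : Γ' → Γ' → Γ' → Prop) (E' : Set Γ') (s' : Γ' → Γ') (hG' : IsZGroupoid m' E' s')
    (eL eR : Γ → Γ)
    (hL : ∀ x, eL x ∈ E ∧ m x (eL x) x) (hR : ∀ x, eR x ∈ E ∧ m x x (eR x))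
    (eL' eR' : Γ' → Γ')
    (hL' : ∀ y, eL' y ∈ E' ∧ m' y (eL' y) y) (hR' : ∀ y, eR' y ∈ E' ∧ m' y y (eR' y))
    (h : Γ' → Γ → Prop) (hmor : IsZMorphism m E s m' E' s' h)
    (B : Set Γ) (hB : IsBisection E eL eR B) :
    IsBisection E' eL' eR' {y | ∃ x ∈ B, h y x} := by
  obtain ⟨hm1, hm2, hm3⟩ := hmor
  have hEmem : ∀ {y' a}, a ∈ E → h y' a → y' ∈ E' := fun {y' a} ha hh => by
    rw [← hm3]; exact ⟨a, ha, hh⟩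
  have hEex : ∀ {y'}, y' ∈ E' → ∃ a ∈ E, h y' a := fun {y'} he => by
    rw [← hm3] at he; exact he
  have hscompat : ∀ {y' x}, h y' x → h (s' y') (s x) := fun {y' x} hh =>
    (hm2 y' (s x)).mp (by rw [hG.1]; exact hh)
  constructor
  · refine ⟨fun y _ => (hL' y).1, ?_, ?_⟩
    · -- InjOn eL'
      rintro y₁ ⟨x₁, hx₁B, hh₁⟩ y₂ ⟨x₂, hx₂B, hh₂⟩ heq
      have hh₁' : h (s' y₁) (s x₁) := hscompat hh₁
      have hcomp : eR' (s' y₁) = eL' y₂ := (zg_eRs hG' hL' hR' y₁).trans heq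
      obtain ⟨z', hz'⟩ := zg_comp hG' hL' hR' hcomp
      obtain ⟨xt, hmx, hhz⟩ := (hm1 z' (s x₁) x₂).mpr ⟨s' y₁, y₂, hh₁', hh₂, hz'⟩
      have heL : eL x₁ = eL x₂ := (zg_eRs hG hL hR x₁).symm.trans (zg_L4 hG hL hR hmx)
      have hx12 : x₁ = x₂ := hB.1.2.1 hx₁B hx₂B heL
      subst hx12
      have hxtE : xt ∈ E := hG.2.2.2.2.2.2 x₁ xt hmx
      exact zg_L11 hG' hL' hR' (hEmem hxtE hhz) hz'
    · -- SurjOn eL'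
      intro e' he'
      obtain ⟨a, ha, hha⟩ := hEex he'
      obtain ⟨x, hxB, hxa⟩ := hB.1.2.2 ha
      have hhe : h e' (eL x) := by rw [hxa]; exact hha
      obtain ⟨y₁, y₂, hy₁, hy₂, hm'⟩ := (hm1 e' x (s x)).mp ⟨eL x, zg_posL_ex hG hL x, hhe⟩
      refine ⟨y₁, ⟨x, hxB, hy₁⟩, ?_⟩
      have h1 : eL' e' = eL' y₁ := zg_L7L hG' hL' hm'
      rw [← h1, zg_eLid hG' hL' he']
  · refine ⟨fun y _ => (hR' y).1, ?_, ?_⟩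
    · -- InjOn eR'
      rintro y₁ ⟨x₁, hx₁B, hh₁⟩ y₂ ⟨x₂, hx₂B, hh₂⟩ heq
      have hh₂' : h (s' y₂) (s x₂) := hscompat hh₂
      have hcomp : eR' y₁ = eL' (s' y₂) := heq.trans (zg_eLs hG' hL' hR' y₂).symm
      obtain ⟨z', hz'⟩ := zg_comp hG' hL' hR' hcomp
      obtain ⟨xt, hmx, hhz⟩ := (hm1 z' x₁ (s x₂)).mpr ⟨y₁, s' y₂, hh₁, hh₂', hz'⟩
      have heR : eR x₁ = eR x₂ := (zg_L4 hG hL hR hmx).trans (zg_eLs hG hL hR x₂)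
      have hx12 : x₁ = x₂ := hB.2.2.1 hx₁B hx₂B heR
      subst hx12
      have hxtE : xt ∈ E := by rw [zg_posL hG hL hmx]; exact (hL x₁).1
      have h2 : m' z' (s' (s' y₁)) (s' y₂) := by rw [hG'.1]; exact hz'
      have h3 : s' y₁ = s' y₂ := zg_L11 hG' hL' hR' (hEmem hxtE hhz) h2
      have h4 := congrArg s' h3
      rwa [hG'.1, hG'.1] at h4
    · -- SurjOn eR'
      intro e' he'
      obtain ⟨a, ha, hha⟩ := hEex he'
      obtain ⟨x, hxB, hxa⟩ := hB.2.2.2 ha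
      have hhe : h e' (eR x) := by rw [hxa]; exact hha
      obtain ⟨y₁, y₂, hy₁, hy₂, hm'⟩ := (hm1 e' (s x) x).mp ⟨eR x, zg_posR_ex hG hR x, hhe⟩
      refine ⟨y₂, ⟨x, hxB, hy₂⟩, ?_⟩
      have h1 : eR' e' = eR' y₂ := zg_L7R hG' hR' hm'
      rw [← h1, zg_eRid hG' hR' he']
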